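/- arXiv:2101.00358 — 3 statements merged into one kernel-verified Lean document; each statement's English description precedes it below -/
import Mathlib

section
/- If λ is a symmetric complex 2-tensor with covariant derivatives satisfying the Codazzi relation, then the tensor R̃_{σγαβ} = Re(λ_{γβ} conj(λ_{σα}) − λ_{γα} conj(λ_{σβ})) satisfies the second Bianchi identity: ∇_δ R̃_{σγαβ} + ∇_σ R̃_{γδαβ} + ∇_γ R̃_{δσαβ} = 0. -/
/-!
By the Leibniz rule, `∇_δ R̃_{σγαβ}` is the real part of
`∇^A_δ λ_{γβ} conj(λ_{σα}) + λ_{γβ} conj(∇^A_δ λ_{σα}) − (α ↔ β)`: the gauge terms cancel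
since `Re (i a z conj w + z conj (i a w)) = 0` for real `a`. The Codazzi relation makes `∇^A λ`
symmetric in its first two indices, and then the cyclic sum over `δ, σ, γ` of these expressions
is of the form `W − conj W`, so its real part vanishes.
-/

noncomputable section
open Complex

abbrev Euc (d : ℕ) := EuclideanSpace ℝ (Fin d)

/-- The partial derivative `∂_α f` of a function on `ℝ^d`. -/
noncomputable def pd {d : ℕ} {E : Type*} [NormedAddCommGroup E] [NormedSpace ℝ E]
    (α : Fin d) (f : Euc d → E) (x : Euc d) : E :=
  fderiv ℝ f x (EuclideanSpace.single α 1)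

/-- The tensor `R̃_{σγαβ} = Re(λ_{γβ} conj(λ_{σα}) − λ_{γα} conj(λ_{σβ}))`. -/
noncomputable def Rt {d : ℕ} (lam : Fin d → Fin d → Euc d → ℂ)
    (σ γ α β : Fin d) (x : Euc d) : ℝ :=
  (lam γ β x * (starRingEnd ℂ) (lam σ α x) - lam γ α x * (starRingEnd ℂ) (lam σ β x)).re

/-- The covariant derivative `∇_δ R̃_{σγαβ}` of the (0,4)-tensor `R̃`, written out with
the Christoffel symbols `Γ`. -/
noncomputable def covRt {d : ℕ} (lam : Fin d → Fin d → Euc d → ℂ)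
    (Γ : Fin d → Fin d → Fin d → Euc d → ℝ)
    (δ σ γ α β : Fin d) (x : Euc d) : ℝ :=
  pd δ (fun y => Rt lam σ γ α β y) x
    - ∑ μ, Γ μ δ σ x * Rt lam μ γ α β x
    - ∑ μ, Γ μ δ γ x * Rt lam σ μ α β x
    - ∑ μ, Γ μ δ α x * Rt lam σ γ μ β x
    - ∑ μ, Γ μ δ β x * Rt lam σ γ α μ x

open ComplexConjugate

section PartialDerivative

variable {d : ℕ} {E F : Type*} [NormedAddCommGroup E] [NormedSpace ℝ E]
  [NormedAddCommGroup F] [NormedSpace ℝ F] {x : Euc d}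

lemma pd_clm_comp (L : E →L[ℝ] F) {f : Euc d → E} (hf : DifferentiableAt ℝ f x) (δ : Fin d) :
    pd δ (fun y => L (f y)) x = L (pd δ f x) := by
  change fderiv ℝ (L ∘ f) x _ = _
  rw [(L.hasFDerivAt.comp x hf.hasFDerivAt).fderiv, ContinuousLinearMap.comp_apply, pd]

lemma pd_sub {f g : Euc d → E} (hf : DifferentiableAt ℝ f x) (hg : DifferentiableAt ℝ g x)
    (δ : Fin d) : pd δ (fun y => f y - g y) x = pd δ f x - pd δ g x := by
  simp only [pd, fderiv_fun_sub hf hg, sub_apply]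

lemma pd_mul {𝔸 : Type*} [NormedCommRing 𝔸] [NormedAlgebra ℝ 𝔸] {f g : Euc d → 𝔸}
    (hf : DifferentiableAt ℝ f x) (hg : DifferentiableAt ℝ g x) (δ : Fin d) :
    pd δ (fun y => f y * g y) x = pd δ f x * g x + f x * pd δ g x := by
  simp only [pd, fderiv_fun_mul hf hg, add_apply, smul_apply, smul_eq_mul]
  ring

lemma pd_re {f : Euc d → ℂ} (hf : DifferentiableAt ℝ f x) (δ : Fin d) :
    pd δ (fun y => (f y).re) x = (pd δ f x).re :=
  pd_clm_comp reCLM hf δ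

lemma pd_conj {f : Euc d → ℂ} (hf : DifferentiableAt ℝ f x) (δ : Fin d) :
    pd δ (fun y => conj (f y)) x = conj (pd δ f x) :=
  pd_clm_comp conjCLE.toContinuousLinearMap hf δ

end PartialDerivative

/-- `leibnizRt l D δ σ γ α β` is the Leibniz-rule expression for the derivative `∂_δ` of
`λ_{γβ} conj(λ_{σα}) − λ_{γα} conj(λ_{σβ})` when `λ = l` and `∂_δ λ_{ab} = D δ a b`. -/
def leibnizRt {ι : Type*} (l : ι → ι → ℂ) (D : ι → ι → ι → ℂ) (δ σ γ α β : ι) : ℂ :=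
  D δ γ β * conj (l σ α) + l γ β * conj (D δ σ α)
    - D δ γ α * conj (l σ β) - l γ α * conj (D δ σ β)

lemma re_leibnizRt_cyclic_sum_eq_zero {ι : Type*} (l : ι → ι → ℂ) (D : ι → ι → ι → ℂ)
    (hD : ∀ a b c, D a b c = D b a c) (δ σ γ α β : ι) :
    (leibnizRt l D δ σ γ α β + leibnizRt l D σ γ δ α β + leibnizRt l D γ δ σ α β).re = 0 := by
  simp only [leibnizRt, hD σ δ, hD γ δ, hD γ σ, add_re, sub_re, mul_re, conj_re, conj_im]
  ring

lemma pd_Rt {d : ℕ} {lam : Fin d → Fin d → Euc d → ℂ} {x : Euc d}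
    (hlam : ∀ α β, DifferentiableAt ℝ (lam α β) x) (δ σ γ α β : Fin d) :
    pd δ (Rt lam σ γ α β) x =
      (leibnizRt (lam · · x) (fun δ a b => pd δ (lam a b) x) δ σ γ α β).re := by
  have hconj : ∀ a b, DifferentiableAt ℝ (fun y => conj (lam a b y)) x := fun a b =>
    conjCLE.toContinuousLinearMap.differentiableAt.comp x (hlam a b)
  have hprod : ∀ a b c e, DifferentiableAt ℝ (fun y => lam a b y * conj (lam c e y)) x :=
    fun a b c e => (hlam a b).mul (hconj c e)
  unfold Rt
  rw [pd_re ((hprod γ β σ α).fun_sub (hprod γ α σ β)),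
    pd_sub (hprod γ β σ α) (hprod γ α σ β),
    pd_mul (hlam γ β) (hconj σ α), pd_mul (hlam γ α) (hconj σ β),
    pd_conj (hlam σ α), pd_conj (hlam σ β), leibnizRt]
  ring_nf

/-- The gauge-covariant derivative `∇^A_δ λ_{γβ}`, with `∇^A = ∇ + iA`. -/
def gaugeCovDeriv {d : ℕ} (lam : Fin d → Fin d → Euc d → ℂ)
    (Γ : Fin d → Fin d → Fin d → Euc d → ℝ) (A : Fin d → Euc d → ℝ)
    (δ γ β : Fin d) (x : Euc d) : ℂ :=
  pd δ (lam γ β) x + I * (A δ x : ℂ) * lam γ β x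
    - ∑ μ, (Γ μ δ γ x : ℂ) * lam μ β x - ∑ μ, (Γ μ δ β x : ℂ) * lam γ μ x

lemma covRt_eq_re_leibnizRt {d : ℕ} {lam : Fin d → Fin d → Euc d → ℂ}
    (Γ : Fin d → Fin d → Fin d → Euc d → ℝ) (A : Fin d → Euc d → ℝ) {x : Euc d}
    (hlam : ∀ α β, DifferentiableAt ℝ (lam α β) x) (δ σ γ α β : Fin d) :
    covRt lam Γ δ σ γ α β x =
      (leibnizRt (lam · · x) (gaugeCovDeriv lam Γ A · · · x) δ σ γ α β).re := by
  rw [covRt, pd_Rt hlam]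
  simp only [leibnizRt, gaugeCovDeriv, Rt, map_add, map_sub, map_mul, map_sum, conj_ofReal,
    conj_I, add_re, sub_re, mul_re, add_im, mul_im, neg_re, neg_im, re_sum, ofReal_re, ofReal_im,
    I_re, I_im, conj_re, conj_im, Finset.mul_sum, Finset.sum_mul, mul_sub, sub_mul,
    Finset.sum_sub_distrib]
  ring_nf

theorem second_bianchi_of_codazzi_general {d : ℕ}
    (lam : Fin d → Fin d → Euc d → ℂ)
    (Γ : Fin d → Fin d → Fin d → Euc d → ℝ)
    (A : Fin d → Euc d → ℝ)
    (hlamDiff : ∀ α β, Differentiable ℝ (fun x => lam α β x))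
    -- the Codazzi relation `∇^A_α λ_{βγ} = ∇^A_β λ_{αγ}`:
    (hCod : ∀ α β γ x,
      pd α (fun y => lam β γ y) x + Complex.I * (A α x : ℂ) * lam β γ x
        - ∑ σ, (Γ σ α β x : ℂ) * lam σ γ x - ∑ σ, (Γ σ α γ x : ℂ) * lam β σ x
      = pd β (fun y => lam α γ y) x + Complex.I * (A β x : ℂ) * lam α γ x
        - ∑ σ, (Γ σ β α x : ℂ) * lam σ γ x - ∑ σ, (Γ σ β γ x : ℂ) * lam α σ x) :
    ∀ δ σ γ α β x,
      covRt lam Γ δ σ γ α β x + covRt lam Γ σ γ δ α β x + covRt lam Γ γ δ σ α β x = 0 := by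
  intro δ σ γ α β x
  simp only [covRt_eq_re_leibnizRt Γ A fun α β => hlamDiff α β x, ← add_re]
  exact re_leibnizRt_cyclic_sum_eq_zero _ _ (fun a b c => hCod a b c x) δ σ γ α β

/-- If a symmetric complex 2-tensor `λ` satisfies the Codazzi relation
`∇^A_α λ_{βγ} = ∇^A_β λ_{αγ}` for the connection `∇^A = ∇ + iA`, then the tensor
`R̃_{σγαβ} = Re(λ_{γβ} conj(λ_{σα}) − λ_{γα} conj(λ_{σβ}))` satisfies the second Bianchi
identity `∇_δ R̃_{σγαβ} + ∇_σ R̃_{γδαβ} + ∇_γ R̃_{δσαβ} = 0`. -/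
theorem second_bianchi_of_codazzi {d : ℕ}
    (lam : Fin d → Fin d → Euc d → ℂ)
    (Γ : Fin d → Fin d → Fin d → Euc d → ℝ)
    (A : Fin d → Euc d → ℝ)
    (hlamDiff : ∀ α β, Differentiable ℝ (fun x => lam α β x))
    (hΓsymm : ∀ γ α β x, Γ γ α β x = Γ γ β α x)
    (hlamsymm : ∀ α β x, lam α β x = lam β α x)
    -- the Codazzi relation `∇^A_α λ_{βγ} = ∇^A_β λ_{αγ}`:
    (hCod : ∀ α β γ x,
      pd α (fun y => lam β γ y) x + Complex.I * (A α x : ℂ) * lam β γ x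
        - ∑ σ, (Γ σ α β x : ℂ) * lam σ γ x - ∑ σ, (Γ σ α γ x : ℂ) * lam β σ x
      = pd β (fun y => lam α γ y) x + Complex.I * (A β x : ℂ) * lam α γ x
        - ∑ σ, (Γ σ β α x : ℂ) * lam σ γ x - ∑ σ, (Γ σ β γ x : ℂ) * lam α σ x) :
    ∀ δ σ γ α β x,
      covRt lam Γ δ σ γ α β x + covRt lam Γ σ γ δ α β x + covRt lam Γ γ δ σ α β x = 0 :=
  second_bianchi_of_codazzi_general lam Γ A hlamDiff hCod
end
end

section
/- Convolution estimate against a polynomially decaying kernel: for 0 < α < d, p > d/(d−α), and f frequency-localized at frequencies ≤ 1, one has ‖⟨x⟩^{α−d} ∗ f‖_{ℓ^p_0 L^∞_t L^2_x} ≲ ‖f‖_{ℓ^1_0 L^∞_t L^2_x}, where ⟨x⟩ = (1+|x|²)^{1/2} and ℓ^p_0 denotes the ℓ^p summation of norms over unit cubes. -/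
/-!
Write `Q_n = n + [0,1)^d` and `⟨x⟩ = (1 + |x|²)^{1/2}`. If `x ∈ Q_n` and `y ∈ Q_m`, then
`|(x - y) - (n - m)| ≤ 2√d`, so `⟨x - y⟩` and `⟨n - m⟩` are comparable (Peetre's inequality).
Hence on `Q_n`, at every time, the convolution is bounded pointwise by
`Σ_m ⟨n - m⟩^{α-d} ‖f‖_{L¹(Q_m)} ≤ Σ_m ⟨n - m⟩^{α-d} ‖f‖_{L²(Q_m)}`, which turns the estimate into
Young's inequality `ℓ^p ∗ ℓ¹ → ℓ^p` on `ℤ^d`. The kernel `k ↦ ⟨k⟩^{α-d}` is in `ℓ^p(ℤ^d)` because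
`(d - α) p > d`: by the same comparison, its `p`-th power sum is bounded by a multiple of
`∫ ⟨x⟩^{(α-d)p} dx < ∞`.
-/

noncomputable section
open MeasureTheory
open scoped ENNReal

/-- The unit cube indexed by `n ∈ ℤ^d`. -/
def unitCube (d : ℕ) (n : Fin d → ℤ) : Set (Euc d) :=
  {x | ∀ i, (n i : ℝ) ≤ x i ∧ x i < (n i : ℝ) + 1}

/-- The `ℓ^p_0 L^∞_t L^2_x` norm on `[0,1] × ℝ^d`: `ℓ^p` summation over unit cubes of the
`L^∞` (in time, over `[0,1]`) of the spatial `L²` norms of the localized function. -/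
noncomputable def lpLinfL2Norm (d : ℕ) (p : ℝ) (u : ℝ → Euc d → ℂ) : ℝ≥0∞ :=
  (∑' n : Fin d → ℤ,
    (⨆ t : Set.Icc (0 : ℝ) 1, eLpNorm ((unitCube d n).indicator (u t.1)) 2 volume) ^ p) ^ (1 / p)

/-- Spatial convolution with the kernel `⟨x⟩^{α−d}`. -/
noncomputable def japConv (d : ℕ) (α : ℝ) (u : ℝ → Euc d → ℂ) : ℝ → Euc d → ℂ :=
  fun t x => ∫ y, ((((1 + ‖x - y‖ ^ 2) ^ ((α - d) / 2) : ℝ) : ℂ)) * u t y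

theorem one_add_norm_sq_le_of_norm_sub_le {E : Type*} [SeminormedAddCommGroup E] {a b : E} {r : ℝ}
    (h : ‖a - b‖ ≤ r) : 1 + ‖a‖ ^ 2 ≤ (2 + 2 * r ^ 2) * (1 + ‖b‖ ^ 2) := by
  have hab : ‖a‖ ≤ ‖b‖ + r := (norm_le_norm_add_norm_sub' a b).trans (by linarith)
  nlinarith [norm_nonneg a, norm_nonneg b, (norm_nonneg _).trans h, sq_nonneg (‖b‖ - r)]

theorem rpow_one_add_norm_sq_le_of_norm_sub_le {E : Type*} [SeminormedAddCommGroup E] {a b : E}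
    {r e : ℝ} (h : ‖a - b‖ ≤ r) (he : e ≤ 0) :
    (1 + ‖b‖ ^ 2) ^ e ≤ (2 + 2 * r ^ 2) ^ (-e) * (1 + ‖a‖ ^ 2) ^ e := by
  have hc : (0 : ℝ) < 2 + 2 * r ^ 2 := by positivity
  calc (1 + ‖b‖ ^ 2) ^ e
      = (2 + 2 * r ^ 2) ^ (-e) * ((2 + 2 * r ^ 2) * (1 + ‖b‖ ^ 2)) ^ e := by
        rw [Real.mul_rpow hc.le (by positivity), ← mul_assoc, ← Real.rpow_add hc, neg_add_cancel,
          Real.rpow_zero, one_mul]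
    _ ≤ (2 + 2 * r ^ 2) ^ (-e) * (1 + ‖a‖ ^ 2) ^ e := by
        gcongr ?_ * ?_
        exact Real.rpow_le_rpow_of_nonpos (by positivity) (one_add_norm_sq_le_of_norm_sub_le h) he

def cubeCorner (d : ℕ) (n : Fin d → ℤ) : Euc d := WithLp.toLp 2 (fun i => (n i : ℝ))

theorem cubeCorner_sub (d : ℕ) (n m : Fin d → ℤ) :
    cubeCorner d (n - m) = cubeCorner d n - cubeCorner d m := by
  ext i
  simp [cubeCorner]

theorem norm_sub_cubeCorner_le {d : ℕ} {n : Fin d → ℤ} {x : Euc d} (hx : x ∈ unitCube d n) :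
    ‖x - cubeCorner d n‖ ≤ √d := by
  rw [EuclideanSpace.norm_eq]
  refine Real.sqrt_le_sqrt ?_
  calc ∑ i, ‖(x - cubeCorner d n) i‖ ^ 2 ≤ ∑ _i : Fin d, (1 : ℝ) := by
        refine Finset.sum_le_sum fun i _ => ?_
        have hxi := hx i
        simp only [PiLp.sub_apply, cubeCorner, Real.norm_eq_abs, sq_abs]
        nlinarith
    _ = d := by simp

theorem unitCube_eq_preimage (d : ℕ) (n : Fin d → ℤ) :
    unitCube d n = (MeasurableEquiv.toLp 2 (Fin d → ℝ)).symm ⁻¹'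
      Set.univ.pi fun i => Set.Ico (n i : ℝ) (n i + 1) := by
  ext x
  simp [unitCube, Set.mem_pi]

theorem measurableSet_unitCube (d : ℕ) (n : Fin d → ℤ) : MeasurableSet (unitCube d n) := by
  rw [unitCube_eq_preimage]
  exact (MeasurableEquiv.toLp 2 (Fin d → ℝ)).symm.measurable
    (MeasurableSet.univ_pi fun _ => measurableSet_Ico)

theorem volume_unitCube (d : ℕ) (n : Fin d → ℤ) : volume (unitCube d n) = 1 := by
  rw [unitCube_eq_preimage,
    (EuclideanSpace.volume_preserving_symm_measurableEquiv_toLp (Fin d)).measure_preimage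
      (MeasurableSet.univ_pi fun _ => measurableSet_Ico).nullMeasurableSet, volume_pi_pi]
  simp

theorem pairwise_disjoint_unitCube (d : ℕ) : Pairwise (Function.onFun Disjoint (unitCube d)) := by
  refine fun n m hnm => Set.disjoint_left.mpr fun x hn hm => hnm (funext fun i => ?_)
  rw [← Int.floor_eq_iff.mpr (hn i), ← Int.floor_eq_iff.mpr (hm i)]

theorem iUnion_unitCube (d : ℕ) : ⋃ n, unitCube d n = Set.univ :=
  Set.eq_univ_of_forall fun x => Set.mem_iUnion.mpr
    ⟨fun i => ⌊x i⌋, fun _ => ⟨Int.floor_le _, Int.lt_floor_add_one _⟩⟩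

theorem lintegral_eq_tsum_setLIntegral_unitCube (d : ℕ) (g : Euc d → ℝ≥0∞) :
    ∫⁻ x, g x = ∑' n, ∫⁻ x in unitCube d n, g x := by
  rw [← lintegral_iUnion (measurableSet_unitCube d) (pairwise_disjoint_unitCube d),
    iUnion_unitCube, Measure.restrict_univ]

theorem tsum_ofReal_rpow_one_add_norm_sq_cubeCorner_lt_top {d : ℕ} {e : ℝ} (he : e < -(d / 2)) :
    ∑' k, ENNReal.ofReal ((1 + ‖cubeCorner d k‖ ^ 2) ^ e) < ∞ := by
  have he0 : e ≤ 0 := by linarith [(by positivity : (0 : ℝ) ≤ d / 2)]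
  set c := ENNReal.ofReal ((2 + 2 * √d ^ 2) ^ (-e))
  have hcube : ∀ k, ENNReal.ofReal ((1 + ‖cubeCorner d k‖ ^ 2) ^ e) ≤
      ∫⁻ x in unitCube d k, c * ENNReal.ofReal ((1 + ‖x‖ ^ 2) ^ e) := fun k =>
    calc ENNReal.ofReal ((1 + ‖cubeCorner d k‖ ^ 2) ^ e)
        = ∫⁻ _ in unitCube d k, ENNReal.ofReal ((1 + ‖cubeCorner d k‖ ^ 2) ^ e) := by
          rw [setLIntegral_const, volume_unitCube, mul_one]
      _ ≤ _ := setLIntegral_mono' (measurableSet_unitCube d k) fun x hx => by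
          rw [← ENNReal.ofReal_mul (by positivity)]
          exact ENNReal.ofReal_le_ofReal
            (rpow_one_add_norm_sq_le_of_norm_sub_le (norm_sub_cubeCorner_le hx) he0)
  have hint : ∫⁻ x : Euc d, ENNReal.ofReal ((1 + ‖x‖ ^ 2) ^ e) < ∞ := by
    have := (integrable_rpow_neg_one_add_norm_sq (μ := volume) (E := Euc d) (r := -2 * e)
      (by rw [finrank_euclideanSpace_fin]; linarith)).lintegral_lt_top
    simpa using this
  calc ∑' k, ENNReal.ofReal ((1 + ‖cubeCorner d k‖ ^ 2) ^ e)
      ≤ ∑' k, ∫⁻ x in unitCube d k, c * ENNReal.ofReal ((1 + ‖x‖ ^ 2) ^ e) :=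
        ENNReal.tsum_le_tsum hcube
    _ = c * ∫⁻ x, ENNReal.ofReal ((1 + ‖x‖ ^ 2) ^ e) := by
        rw [← lintegral_eq_tsum_setLIntegral_unitCube,
          lintegral_const_mul' _ _ ENNReal.ofReal_ne_top]
    _ < ∞ := ENNReal.mul_lt_top ENNReal.ofReal_lt_top hint

def latticeMajorant (d : ℕ) (e : ℝ) (k : Fin d → ℤ) : ℝ≥0∞ :=
  ENNReal.ofReal ((2 + 8 * d) ^ (-e)) * ENNReal.ofReal ((1 + ‖cubeCorner d k‖ ^ 2) ^ e)

theorem enorm_rpow_one_add_norm_sq_sub_le_latticeMajorant {d : ℕ} {n m : Fin d → ℤ}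
    {x y : Euc d} (hx : x ∈ unitCube d n) (hy : y ∈ unitCube d m) {e : ℝ} (he : e ≤ 0) :
    ‖(1 + ‖x - y‖ ^ 2) ^ e‖ₑ ≤ latticeMajorant d e (n - m) := by
  have hdist : ‖cubeCorner d (n - m) - (x - y)‖ ≤ 2 * √d := by
    rw [cubeCorner_sub, show cubeCorner d n - cubeCorner d m - (x - y) =
      (y - cubeCorner d m) - (x - cubeCorner d n) by abel]
    linarith [norm_sub_le (y - cubeCorner d m) (x - cubeCorner d n), norm_sub_cubeCorner_le hx,
      norm_sub_cubeCorner_le hy]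
  have hpeetre := rpow_one_add_norm_sq_le_of_norm_sub_le hdist he
  rw [mul_pow, Real.sq_sqrt d.cast_nonneg] at hpeetre
  rw [Real.enorm_eq_ofReal (by positivity), latticeMajorant, ← ENNReal.ofReal_mul (by positivity)]
  exact ENNReal.ofReal_le_ofReal (hpeetre.trans_eq (by ring_nf))

theorem tsum_latticeMajorant_rpow_ne_top {d : ℕ} {e p : ℝ} (hp : 0 ≤ p) (hep : e * p < -(d / 2)) :
    ∑' k, latticeMajorant d e k ^ p ≠ ⊤ := by
  have hpow : ∀ k, latticeMajorant d e k ^ p = ENNReal.ofReal ((2 + 8 * d) ^ (-e)) ^ p *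
      ENNReal.ofReal ((1 + ‖cubeCorner d k‖ ^ 2) ^ (e * p)) := fun k => by
    rw [latticeMajorant, ENNReal.mul_rpow_of_nonneg _ _ hp,
      ENNReal.ofReal_rpow_of_nonneg (x := (1 + _) ^ e) (by positivity) hp,
      ← Real.rpow_mul (by positivity)]
  rw [tsum_congr hpow, ENNReal.tsum_mul_left]
  exact ENNReal.mul_ne_top (ENNReal.rpow_ne_top_of_nonneg hp ENNReal.ofReal_ne_top)
    (tsum_ofReal_rpow_one_add_norm_sq_cubeCorner_lt_top hep).ne

section SetOfMeasureAtMostOne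

variable {X E : Type*} [MeasurableSpace X] {μ : Measure X} {s : Set X}

theorem setLIntegral_enorm_le_eLpNorm_two_indicator [NormedAddCommGroup E] (hs : MeasurableSet s)
    (hμs : μ s ≤ 1) {g : X → E} (hg : AEStronglyMeasurable g μ) :
    ∫⁻ x in s, ‖g x‖ₑ ∂μ ≤ eLpNorm (s.indicator g) 2 μ := by
  rw [eLpNorm_indicator_eq_eLpNorm_restrict hs, ← eLpNorm_one_eq_lintegral_enorm]
  refine (eLpNorm_le_eLpNorm_mul_rpow_measure_univ one_le_two hg.restrict).trans ?_
  rw [Measure.restrict_apply_univ]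
  exact mul_le_of_le_one_right' (ENNReal.rpow_le_one hμs (by norm_num))

theorem eLpNorm_indicator_le_of_forall_mem_enorm_le [NormedAddCommGroup E] (hs : MeasurableSet s)
    (hμs : μ s ≤ 1) {p : ℝ≥0∞} {u : X → E} {C : ℝ≥0∞} (hC : ∀ x ∈ s, ‖u x‖ₑ ≤ C) :
    eLpNorm (s.indicator u) p μ ≤ C := by
  rw [eLpNorm_indicator_eq_eLpNorm_restrict hs]
  refine (eLpNorm_le_of_ae_enorm_bound (ae_restrict_of_forall_mem hs hC)).trans ?_
  rw [Measure.restrict_apply_univ, smul_eq_mul]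
  exact mul_le_of_le_one_right' (ENNReal.rpow_le_one hμs (by positivity))

end SetOfMeasureAtMostOne

section ConvolutionOnCubes

variable {d : ℕ} (k : Euc d → ℝ) {g : Euc d → ℂ}

theorem enorm_integral_kernel_mul_le_tsum {x : Euc d} (K : (Fin d → ℤ) → ℝ≥0∞)
    (hk : ∀ m, ∀ y ∈ unitCube d m, ‖k (x - y)‖ₑ ≤ K m) (hg : AEStronglyMeasurable g volume) :
    ‖∫ y, (k (x - y) : ℂ) * g y‖ₑ ≤ ∑' m, K m * ∫⁻ y in unitCube d m, ‖g y‖ₑ :=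
  calc ‖∫ y, (k (x - y) : ℂ) * g y‖ₑ
      ≤ ∫⁻ y, ‖k (x - y)‖ₑ * ‖g y‖ₑ := by
        refine (enorm_integral_le_lintegral_enorm _).trans_eq (lintegral_congr fun y => ?_)
        rw [enorm_mul, enorm_eq_nnnorm, Complex.nnnorm_real, ← enorm_eq_nnnorm]
    _ = ∑' m, ∫⁻ y in unitCube d m, ‖k (x - y)‖ₑ * ‖g y‖ₑ :=
        lintegral_eq_tsum_setLIntegral_unitCube d _
    _ ≤ ∑' m, ∫⁻ y in unitCube d m, K m * ‖g y‖ₑ := ENNReal.tsum_le_tsum fun m =>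
        setLIntegral_mono' (measurableSet_unitCube d m) fun y hy => by gcongr; exact hk m y hy
    _ = ∑' m, K m * ∫⁻ y in unitCube d m, ‖g y‖ₑ := by
        simp_rw [lintegral_const_mul'' _ hg.enorm.restrict]

theorem eLpNorm_indicator_unitCube_conv_le (K : (Fin d → ℤ) → ℝ≥0∞)
    (hk : ∀ n m, ∀ x ∈ unitCube d n, ∀ y ∈ unitCube d m, ‖k (x - y)‖ₑ ≤ K (n - m))
    (hg : AEStronglyMeasurable g volume) (n : Fin d → ℤ) :
    eLpNorm ((unitCube d n).indicator fun x => ∫ y, (k (x - y) : ℂ) * g y) 2 volume ≤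
      ∑' m, K (n - m) * eLpNorm ((unitCube d m).indicator g) 2 volume := by
  refine eLpNorm_indicator_le_of_forall_mem_enorm_le (measurableSet_unitCube d n)
    (volume_unitCube d n).le fun x hx => ?_
  refine (enorm_integral_kernel_mul_le_tsum k _ (fun m y hy => hk n m x hx y hy) hg).trans ?_
  gcongr with m
  exact setLIntegral_enorm_le_eLpNorm_two_indicator (measurableSet_unitCube d m)
    (volume_unitCube d m).le hg

end ConvolutionOnCubes

namespace ENNReal

theorem inner_le_weight_mul_Lp_tsum {ι : Type*} (w f : ι → ℝ≥0∞) {p : ℝ} (hp : 1 ≤ p) :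
    ∑' i, w i * f i ≤ (∑' i, w i) ^ (1 - p⁻¹) * (∑' i, w i * f i ^ p) ^ p⁻¹ := by
  have hp' : 0 ≤ 1 - p⁻¹ := sub_nonneg.mpr (inv_le_one_of_one_le₀ hp)
  rw [ENNReal.tsum_eq_iSup_sum]
  refine iSup_le fun s => (inner_le_weight_mul_Lp_of_nonneg s hp w f).trans ?_
  gcongr <;> exact ENNReal.sum_le_tsum s

theorem tsum_conv_rpow_le {G : Type*} [AddGroup G] (K b : G → ℝ≥0∞) {p : ℝ} (hp : 1 ≤ p) :
    (∑' n, (∑' m, K (n - m) * b m) ^ p) ^ (1 / p) ≤ (∑' k, K k ^ p) ^ (1 / p) * ∑' m, b m := by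
  have hp0 : 0 < p := zero_lt_one.trans_le hp
  set B := ∑' m, b m
  have hpoint : ∀ n, (∑' m, K (n - m) * b m) ^ p ≤ B ^ (p - 1) * ∑' m, b m * K (n - m) ^ p := by
    intro n
    calc (∑' m, K (n - m) * b m) ^ p = (∑' m, b m * K (n - m)) ^ p := by simp_rw [mul_comm]
      _ ≤ (B ^ (1 - p⁻¹) * (∑' m, b m * K (n - m) ^ p) ^ p⁻¹) ^ p := by
          gcongr; exact inner_le_weight_mul_Lp_tsum b _ hp
      _ = B ^ (p - 1) * ∑' m, b m * K (n - m) ^ p := by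
          rw [mul_rpow_of_nonneg _ _ hp0.le, ← rpow_mul, ← rpow_mul, inv_mul_cancel₀ hp0.ne',
            rpow_one, sub_mul, one_mul, inv_mul_cancel₀ hp0.ne']
  have hshift : ∀ m, ∑' n, K (n - m) ^ p = ∑' k, K k ^ p := fun m =>
    (Equiv.subRight m).tsum_eq fun k => K k ^ p
  calc (∑' n, (∑' m, K (n - m) * b m) ^ p) ^ (1 / p)
      ≤ (B ^ (p - 1) * ∑' n, ∑' m, b m * K (n - m) ^ p) ^ (1 / p) := by
        rw [← ENNReal.tsum_mul_left]
        gcongr with n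
        exact hpoint n
    _ = (B ^ p * ∑' k, K k ^ p) ^ (1 / p) := by
        rw [ENNReal.tsum_comm]
        simp_rw [ENNReal.tsum_mul_left, hshift, ENNReal.tsum_mul_right, ← mul_assoc]
        congr 2
        conv_rhs => rw [← sub_add_cancel p 1, rpow_add_of_nonneg _ _ (by linarith) zero_le_one,
          rpow_one]
    _ = (∑' k, K k ^ p) ^ (1 / p) * B := by
        rw [mul_rpow_of_nonneg _ _ (by positivity), ← rpow_mul, mul_one_div_cancel hp0.ne',
          rpow_one, mul_comm]

end ENNReal

theorem convolution_decay_estimate_general (d : ℕ) (α : ℝ) (hα0 : 0 < α)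
    (hαd : α < d) (p : ℝ) (hp : (d : ℝ) / ((d : ℝ) - α) < p) :
    ∃ C : ℝ≥0∞, C ≠ ⊤ ∧
      ∀ f : ℝ → Euc d → ℂ,
        (∀ t, AEStronglyMeasurable (f t) volume) →
        (∀ t, Integrable (f t) volume) →
        (∀ t ξ, 2 < ‖ξ‖ → FourierTransform.fourier (f t) ξ = 0) →
        lpLinfL2Norm d p (japConv d α f) ≤ C * lpLinfL2Norm d 1 f := by
  have hdα : 0 < (d : ℝ) - α := by linarith
  have hp1 : 1 < p := ((one_lt_div hdα).mpr (by linarith)).trans hp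
  set e := (α - d) / 2 with he_def
  have he : e ≤ 0 := by linarith
  have hdecay : e * p < -(d / 2) := by
    rw [div_lt_iff₀ hdα] at hp
    nlinarith
  set K := latticeMajorant d e
  refine ⟨(∑' k, K k ^ p) ^ (1 / p), ENNReal.rpow_ne_top_of_nonneg (by positivity)
    (tsum_latticeMajorant_rpow_ne_top (by positivity) hdecay), fun f hf _ _ => ?_⟩
  set b : (Fin d → ℤ) → ℝ≥0∞ := fun m =>
    ⨆ t : Set.Icc (0 : ℝ) 1, eLpNorm ((unitCube d m).indicator (f t)) 2 volume
  calc lpLinfL2Norm d p (japConv d α f) ≤ (∑' n, (∑' m, K (n - m) * b m) ^ p) ^ (1 / p) := by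
        unfold lpLinfL2Norm
        gcongr with n
        refine iSup_le fun t => (eLpNorm_indicator_unitCube_conv_le (fun z => (1 + ‖z‖ ^ 2) ^ e) K
          (fun n m x hx y hy => enorm_rpow_one_add_norm_sq_sub_le_latticeMajorant hx hy he)
          (hf t) n).trans ?_
        gcongr with m
        exact le_iSup (fun t : Set.Icc (0 : ℝ) 1 => eLpNorm ((unitCube d m).indicator (f t)) 2 _) t
    _ ≤ (∑' k, K k ^ p) ^ (1 / p) * ∑' m, b m := ENNReal.tsum_conv_rpow_le K b hp1.le
    _ = (∑' k, K k ^ p) ^ (1 / p) * lpLinfL2Norm d 1 f := by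
        simp only [lpLinfL2Norm, div_one, ENNReal.rpow_one, b]

/-- Convolution estimate against a polynomially decaying kernel.  For
`0 < α < d`, `p > d/(d−α)` and `f` frequency-localized at frequencies `≲ 1`,
`‖⟨x⟩^{α−d} ∗ f‖_{ℓ^p_0 L^∞ L²} ≲ ‖f‖_{ℓ^1_0 L^∞ L²}`. -/
theorem convolution_decay_estimate (d : ℕ) (hd : 0 < d) (α : ℝ) (hα0 : 0 < α)
    (hαd : α < d) (p : ℝ) (hp : (d : ℝ) / ((d : ℝ) - α) < p) :
    ∃ C : ℝ≥0∞, C ≠ ⊤ ∧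
      ∀ f : ℝ → Euc d → ℂ,
        (∀ t, AEStronglyMeasurable (f t) volume) →
        (∀ t, Integrable (f t) volume) →
        (∀ t ξ, 2 < ‖ξ‖ → FourierTransform.fourier (f t) ξ = 0) →
        lpLinfL2Norm d p (japConv d α f) ≤ C * lpLinfL2Norm d 1 f :=
  convolution_decay_estimate_general d α hα0 hαd p hp
end
end

section
/- Propagation of orthonormality of the moving frame: suppose (F_α, m) solve the linear ODE system in time ∂_t F_α = −Im(∂^A_α ψ conj(m) − iλ_{αγ}V^γ conj(m)) + [Im(ψ conj(λ^γ_α)) + ∇_α V^γ] F_γ and ∂_t m + iB m = −i(∂^{A,α}ψ − iλ^α_γ V^γ) F_α, with coefficients continuous in time. Define g̃_{α0} = ⟨F_α, m⟩, g̃_{00} = ⟨m,m⟩, and suppose at t = 0: g̃_{α0} = 0, g̃_{00} = 2, ⟨m, conj(m)⟩ = 0, and ⟨F_α, F_β⟩ = g_{αβ} where ∂_t g_{αβ} = 2Im(ψ conj(λ_{αβ})) + ∇_α V_β + ∇_β V_α. Then the quantities (g̃_{α0}, g̃_{00} − 2, ⟨m, conj(m)⟩, g_{αβ} − ⟨F_α,F_β⟩)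 satisfy a linear homogeneous ODE system in t, and hence vanish identically for all t; in particular the orthogonality relations F_α ⊥ m, ⟨m,m⟩ = 2, ⟨m, conj(m)⟩ = 0, ⟨F_α,F_β⟩ = g_{αβ} are propagated in time. -/
/-!
The defects `(⟨F_α, m⟩, g_{αβ} - ⟨F_α, F_β⟩, ⟨m, m⟩ - 2, ⟨m, m̄⟩)` obey a closed linear ODE
whose coefficients are continuous in time. Differentiating them along the frame equations, all
inhomogeneous terms cancel: `g` lowers the raised indices of `∂^{A,α}ψ - iλ^α_γ V^γ` and of
`λ^γ_α`, and the symmetry of `g` forces `Im(ψ λ̄_{αβ})` to be symmetric. So the norm of the defect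
vector has derivative bounded by a continuous multiple of itself, and Grönwall's inequality,
applied forwards and backwards in time from `t = 0`, makes it vanish identically.
-/

noncomputable section
open Complex

/-- The raised-index second fundamental form `λ^γ_α = g^{γσ} λ_{σα}` (as a function of
time, at a fixed spatial point). -/
noncomputable def lamUp {d : ℕ} (ginv : Fin d → Fin d → ℝ → ℝ)
    (lam : Fin d → Fin d → ℝ → ℂ) (γ α : Fin d) (t : ℝ) : ℂ :=
  ∑ σ, (ginv γ σ t : ℂ) * lam σ α t

open Finset Matrix ComplexConjugate

section Gronwall

variable {E : Type*} [NormedAddCommGroup E] [NormedSpace ℝ E] {f f' : ℝ → E} {K : ℝ → ℝ}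

theorem eq_zero_of_norm_deriv_le_mul_norm_of_nonneg (hK : Continuous K)
    (hf : ∀ t, HasDerivAt f (f' t) t) (hbound : ∀ t, ‖f' t‖ ≤ K t * ‖f t‖) (h0 : f 0 = 0)
    {t : ℝ} (ht : 0 ≤ t) : f t = 0 := by
  obtain ⟨C, hC⟩ := isCompact_Icc.bddAbove_image (hK.continuousOn (s := Set.Icc 0 t))
  refine eq_zero_of_abs_deriv_le_mul_abs_self_of_eq_zero_right (K := C)
    (fun s _ => (hf s).continuousAt.continuousWithinAt) (fun s _ => (hf s).hasDerivWithinAt) h0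
    (fun s hs => ?_) t ⟨ht, le_rfl⟩
  exact (hbound s).trans <| mul_le_mul_of_nonneg_right
    (hC ⟨s, Set.Ico_subset_Icc_self hs, rfl⟩) (norm_nonneg _)

theorem eq_zero_of_norm_deriv_le_mul_norm (hK : Continuous K)
    (hf : ∀ t, HasDerivAt f (f' t) t) (hbound : ∀ t, ‖f' t‖ ≤ K t * ‖f t‖) (h0 : f 0 = 0)
    (t : ℝ) : f t = 0 := by
  rcases le_total 0 t with ht | ht
  · exact eq_zero_of_norm_deriv_le_mul_norm_of_nonneg hK hf hbound h0 ht
  · have hrev := eq_zero_of_norm_deriv_le_mul_norm_of_nonneg (f := fun s => f (-s))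
      (f' := fun s => -f' (-s)) (K := fun s => K (-s)) (hK.comp continuous_neg)
      (fun s => by simpa [Function.comp_def] using (hf (-s)).scomp s (hasDerivAt_neg s))
      (fun s => by simpa using hbound (-s)) (by simpa using h0) (neg_nonneg.2 ht)
    simpa using hrev

end Gronwall

theorem HasDerivAt.dotProduct {ι 𝕜 𝔸 : Type*} [Fintype ι] [NontriviallyNormedField 𝕜]
    [NormedCommRing 𝔸] [NormedAlgebra 𝕜 𝔸] {u v : 𝕜 → ι → 𝔸} {u' v' : ι → 𝔸} {x : 𝕜}
    (hu : HasDerivAt u u' x) (hv : HasDerivAt v v' x) :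
    HasDerivAt (fun y => u y ⬝ᵥ v y) (u' ⬝ᵥ v x + u x ⬝ᵥ v') x := by
  simp only [_root_.dotProduct, ← Finset.sum_add_distrib]
  exact HasDerivAt.fun_sum fun i _ => (hasDerivAt_pi.1 hu i).mul (hasDerivAt_pi.1 hv i)

theorem sum_mul_sum_mul_eq_self {ι : Type*} [Fintype ι] [DecidableEq ι]
    {G Ginv : ι → ι → ℝ} (h : ∀ α β, ∑ σ, G α σ * Ginv σ β = if α = β then 1 else 0)
    (x : ι → ℂ) (α : ι) : ∑ β, (G α β : ℂ) * ∑ μ, (Ginv β μ : ℂ) * x μ = x α := by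
  simp_rw [Finset.mul_sum, ← mul_assoc]
  rw [Finset.sum_comm]
  simp_rw [← Finset.sum_mul, ← Complex.ofReal_mul, ← Complex.ofReal_sum, h]
  simp [apply_ite Complex.ofReal, ite_mul]

section FrameCoefficients

variable {d : ℕ} (ψ : ℝ → ℂ) (lam : Fin d → Fin d → ℝ → ℂ) (V : Fin d → ℝ → ℝ)
  (g ginv : Fin d → Fin d → ℝ → ℝ) (dAψ upDAψ : Fin d → ℝ → ℂ)
  (covDV covDVl : Fin d → Fin d → ℝ → ℝ)

def normalCoeff (α : Fin d) (t : ℝ) : ℂ := dAψ α t - I * ∑ γ, lam α γ t * (V γ t : ℂ)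

def normalCoeffUp (α : Fin d) (t : ℝ) : ℂ :=
  upDAψ α t - I * ∑ γ, lamUp ginv lam α γ t * (V γ t : ℂ)

def frameCoeff (α γ : Fin d) (t : ℝ) : ℝ :=
  (ψ t * conj (lamUp ginv lam γ α t)).im + covDV α γ t

variable {ψ lam V g ginv dAψ upDAψ covDV covDVl}

theorem sum_mul_lamUp (hginv' : ∀ α β t, ∑ σ, g α σ t * ginv σ β t = if α = β then 1 else 0)
    (α γ : Fin d) (t : ℝ) : ∑ β, (g α β t : ℂ) * lamUp ginv lam β γ t = lam α γ t :=
  sum_mul_sum_mul_eq_self (fun α β => hginv' α β t) (fun σ => lam σ γ t) α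

theorem sum_mul_normalCoeffUp
    (hginv' : ∀ α β t, ∑ σ, g α σ t * ginv σ β t = if α = β then 1 else 0)
    (hup : ∀ α t, upDAψ α t = ∑ μ, (ginv α μ t : ℂ) * dAψ μ t) (α : Fin d) (t : ℝ) :
    ∑ β, (g α β t : ℂ) * normalCoeffUp lam V ginv upDAψ β t = normalCoeff lam V dAψ α t := by
  have hlower : ∑ β, (g α β t : ℂ) * upDAψ β t = dAψ α t := by
    simp_rw [hup]
    exact sum_mul_sum_mul_eq_self (fun α β => hginv' α β t) (dAψ · t) α
  have hlam : ∑ β, (g α β t : ℂ) * ∑ γ, lamUp ginv lam β γ t * (V γ t : ℂ)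
      = ∑ γ, lam α γ t * (V γ t : ℂ) := by
    simp_rw [Finset.mul_sum, ← mul_assoc]
    rw [Finset.sum_comm]
    simp_rw [← Finset.sum_mul, sum_mul_lamUp hginv']
  simp only [normalCoeffUp, normalCoeff, mul_sub, Finset.sum_sub_distrib, hlower,
    mul_left_comm _ I, ← Finset.mul_sum, hlam]

theorem sum_frameCoeff_mul
    (hginv' : ∀ α β t, ∑ σ, g α σ t * ginv σ β t = if α = β then 1 else 0)
    (hgsymm : ∀ α β t, g α β t = g β α t)
    (hlow : ∀ α β t, covDVl α β t = ∑ γ, g β γ t * covDV α γ t) (α β : Fin d) (t : ℝ) :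
    ∑ γ, frameCoeff ψ lam ginv covDV α γ t * g γ β t
      = (ψ t * conj (lam β α t)).im + covDVl α β t := by
  have hlam : ∑ γ, (ψ t * conj (lamUp ginv lam γ α t)).im * g γ β t
      = (ψ t * conj (lam β α t)).im := by
    rw [← sum_mul_lamUp (lam := lam) hginv' β α t, map_sum, Finset.mul_sum, Complex.im_sum]
    refine Finset.sum_congr rfl fun γ _ => ?_
    rw [hgsymm, map_mul, Complex.conj_ofReal, mul_left_comm, Complex.im_ofReal_mul, mul_comm]
  simp only [frameCoeff, add_mul, Finset.sum_add_distrib, hlam, hlow, hgsymm β, mul_comm (g _ _ t)]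

theorem im_mul_conj_lam_symm (hgsymm : ∀ α β t, g α β t = g β α t)
    (hgODE : ∀ α β t, HasDerivAt (g α β)
      (2 * (ψ t * conj (lam α β t)).im + covDVl α β t + covDVl β α t) t)
    (α β : Fin d) (t : ℝ) : (ψ t * conj (lam α β t)).im = (ψ t * conj (lam β α t)).im := by
  have h := hgODE α β t
  rw [show g α β = g β α from funext (hgsymm α β)] at h
  linarith [h.unique (hgODE β α t)]

end FrameCoefficients

theorem norm_sum_mul_le_of_norm_le {ι R : Type*} [SeminormedRing R] (s : Finset ι)
    (a x : ι → R) {S : ℝ} (hx : ∀ i ∈ s, ‖x i‖ ≤ S) :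
    ‖∑ i ∈ s, a i * x i‖ ≤ (∑ i ∈ s, ‖a i‖) * S := by
  rw [Finset.sum_mul]
  refine (norm_sum_le _ _).trans (Finset.sum_le_sum fun i hi => ?_)
  exact (norm_mul_le _ _).trans (mul_le_mul_of_nonneg_left (hx i hi) (norm_nonneg _))

section DefectField

variable {d : ℕ}

abbrev FrameDefect (d : ℕ) : Type := (Fin d → ℂ) × (Fin d → Fin d → ℝ) × ℂ × ℂ

theorem FrameDefect.norm_components_le (x : FrameDefect d) :
    (∀ γ, ‖x.1 γ‖ ≤ ‖x‖) ∧ (∀ γ δ, ‖x.2.1 γ δ‖ ≤ ‖x‖) ∧ ‖x.2.2.1‖ ≤ ‖x‖ ∧ ‖x.2.2.2‖ ≤ ‖x‖ :=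
  ⟨fun γ => (norm_le_pi_norm x.1 γ).trans (norm_fst_le x),
    fun γ δ => (norm_le_pi_norm (x.2.1 γ) δ).trans <| (norm_le_pi_norm x.2.1 γ).trans <|
      (norm_fst_le x.2).trans (norm_snd_le x),
    (norm_fst_le x.2.2).trans <| (norm_snd_le x.2).trans (norm_snd_le x),
    (norm_snd_le x.2.2).trans <| (norm_snd_le x.2).trans (norm_snd_le x)⟩

variable (B : ℝ) (a : Fin d → Fin d → ℝ) (c cU : Fin d → ℂ) (x : FrameDefect d)

/-- The time derivative of the defects, as a function of the defects, when the frame coefficients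
`B`, `frameCoeff`, `normalCoeff`, `normalCoeffUp` take the values `B`, `a`, `c`, `cU`. -/
def defectField : FrameDefect d :=
  (fun α => ∑ γ, (a α γ : ℂ) * x.1 γ + I * B * x.1 α + I / 2 * c α * conj x.2.2.2
      - I / 2 * conj (c α) * x.2.2.1 - I * ∑ β, conj (cU β) * x.2.1 α β,
    fun α β => (c α * x.1 β).im + (c β * x.1 α).im
      + ∑ γ, a α γ * x.2.1 γ β + ∑ γ, a β γ * x.2.1 γ α,
    -I * ∑ β, cU β * x.1 β + I * conj (∑ β, cU β * x.1 β),
    -2 * I * B * x.2.2.2 - 2 * I * ∑ β, cU β * conj (x.1 β))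

def defectFieldBound : ℝ := 2 * (|B| + ∑ α, ∑ γ, |a α γ| + ∑ α, ‖c α‖ + ∑ α, ‖cU α‖)

theorem norm_defectField_fst_le (α : Fin d) :
    ‖(defectField B a c cU x).1 α‖ ≤ defectFieldBound B a c cU * ‖x‖ := by
  obtain ⟨hh, hr, hp, hq⟩ := x.norm_components_le
  have e1 := norm_sum_mul_le_of_norm_le univ (fun γ => (a α γ : ℂ)) x.1 fun γ _ => hh γ
  have e5 := norm_sum_mul_le_of_norm_le univ (fun β => conj (cU β)) (fun β => (x.2.1 α β : ℂ))
    fun β _ => (Complex.norm_real _).trans_le (hr α β)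
  simp only [Complex.norm_real, Real.norm_eq_abs, RCLike.norm_conj] at e1 e5
  simp only [defectField, defectFieldBound]
  grw [norm_sub_le, norm_sub_le, norm_add_le, norm_add_le, e1, norm_mul I, e5]
  simp only [norm_mul, norm_div, norm_I, Complex.norm_two, RCLike.norm_conj, Complex.norm_real,
    Real.norm_eq_abs]
  grw [hh α, hp, hq]
  have ha := Finset.single_le_sum (f := fun α => ∑ γ, |a α γ|) (fun _ _ => by positivity)
    (Finset.mem_univ α)
  have hc := Finset.single_le_sum (f := fun α => ‖c α‖) (fun _ _ => by positivity)
    (Finset.mem_univ α)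
  have hS := norm_nonneg x
  nlinarith [mul_le_mul_of_nonneg_right ha hS, mul_le_mul_of_nonneg_right hc hS,
    mul_nonneg (abs_nonneg B) hS, mul_nonneg (by positivity : 0 ≤ ∑ α, ‖cU α‖) hS,
    mul_nonneg (by positivity : 0 ≤ ∑ α, ∑ γ, |a α γ|) hS,
    mul_nonneg (by positivity : 0 ≤ ∑ α, ‖c α‖) hS]

theorem norm_defectField_snd_fst_le (α β : Fin d) :
    ‖(defectField B a c cU x).2.1 α β‖ ≤ defectFieldBound B a c cU * ‖x‖ := by
  obtain ⟨hh, hr, -, -⟩ := x.norm_components_le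
  have hIm : ∀ α β, ‖(c α * x.1 β).im‖ ≤ ‖c α‖ * ‖x‖ := fun α β => by
    grw [Real.norm_eq_abs, Complex.abs_im_le_norm, norm_mul, hh β]
  have e : ∀ α β, ‖∑ γ, a α γ * x.2.1 γ β‖ ≤ (∑ γ, |a α γ|) * ‖x‖ := fun α β => by
    simpa only [Real.norm_eq_abs] using
      norm_sum_mul_le_of_norm_le univ (a α) (fun γ => x.2.1 γ β) fun γ _ => hr γ β
  simp only [defectField, defectFieldBound]
  grw [norm_add_le, norm_add_le, norm_add_le, hIm, hIm, e, e]
  have ha := fun α => Finset.single_le_sum (f := fun α => ∑ γ, |a α γ|)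
    (fun _ _ => by positivity) (Finset.mem_univ α)
  have hc := fun α => Finset.single_le_sum (f := fun α => ‖c α‖) (fun _ _ => by positivity)
    (Finset.mem_univ α)
  have hS := norm_nonneg x
  nlinarith [mul_le_mul_of_nonneg_right (ha α) hS, mul_le_mul_of_nonneg_right (hc α) hS,
    mul_le_mul_of_nonneg_right (ha β) hS, mul_le_mul_of_nonneg_right (hc β) hS,
    mul_nonneg (abs_nonneg B) hS, mul_nonneg (by positivity : 0 ≤ ∑ α, ‖cU α‖) hS]

theorem norm_defectField_snd_snd_fst_le :
    ‖(defectField B a c cU x).2.2.1‖ ≤ defectFieldBound B a c cU * ‖x‖ := by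
  have e := norm_sum_mul_le_of_norm_le univ cU x.1 fun γ _ => x.norm_components_le.1 γ
  simp only [defectField, defectFieldBound]
  grw [norm_add_le, norm_mul, norm_mul, RCLike.norm_conj, e]
  simp only [norm_neg, norm_I]
  have hS := norm_nonneg x
  nlinarith [mul_nonneg (abs_nonneg B) hS, mul_nonneg (by positivity : 0 ≤ ∑ α, ‖cU α‖) hS,
    mul_nonneg (by positivity : 0 ≤ ∑ α, ∑ γ, |a α γ|) hS,
    mul_nonneg (by positivity : 0 ≤ ∑ α, ‖c α‖) hS]

theorem norm_defectField_snd_snd_snd_le :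
    ‖(defectField B a c cU x).2.2.2‖ ≤ defectFieldBound B a c cU * ‖x‖ := by
  obtain ⟨hh, -, -, hq⟩ := x.norm_components_le
  have e := norm_sum_mul_le_of_norm_le univ cU (fun β => conj (x.1 β)) fun γ _ =>
    (RCLike.norm_conj _).trans_le (hh γ)
  simp only [defectField, defectFieldBound]
  grw [norm_sub_le, norm_mul, norm_mul (2 * I), e]
  simp only [norm_mul, norm_neg, norm_I, Complex.norm_two, Complex.norm_real, Real.norm_eq_abs]
  grw [hq]
  have hS := norm_nonneg x
  nlinarith [mul_nonneg (abs_nonneg B) hS, mul_nonneg (by positivity : 0 ≤ ∑ α, ‖cU α‖) hS,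
    mul_nonneg (by positivity : 0 ≤ ∑ α, ∑ γ, |a α γ|) hS,
    mul_nonneg (by positivity : 0 ≤ ∑ α, ‖c α‖) hS]

theorem norm_defectField_le :
    ‖defectField B a c cU x‖ ≤ defectFieldBound B a c cU * ‖x‖ := by
  have hM : 0 ≤ defectFieldBound B a c cU * ‖x‖ := by
    unfold defectFieldBound
    positivity
  refine norm_prod_le_iff.2 ⟨(pi_norm_le_iff_of_nonneg hM).2 fun α => ?_, norm_prod_le_iff.2
    ⟨(pi_norm_le_iff_of_nonneg hM).2 fun α => (pi_norm_le_iff_of_nonneg hM).2 fun β => ?_,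
      norm_prod_le_iff.2 ⟨?_, ?_⟩⟩⟩
  · exact norm_defectField_fst_le B a c cU x α
  · exact norm_defectField_snd_fst_le B a c cU x α β
  · exact norm_defectField_snd_snd_fst_le B a c cU x
  · exact norm_defectField_snd_snd_snd_le B a c cU x

end DefectField

theorem ofReal_dotProduct {ι : Type*} [Fintype ι] (u v : ι → ℝ) :
    ((u ⬝ᵥ v : ℝ) : ℂ) = (fun j => (u j : ℂ)) ⬝ᵥ (fun j => (v j : ℂ)) := by
  simp [dotProduct]

theorem im_mul_conj_dotProduct {ι : Type*} [Fintype ι] (z : ℂ) (w : ι → ℂ) (u : ι → ℝ) :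
    (fun j => (z * conj (w j)).im) ⬝ᵥ u = (z * ((fun j => (u j : ℂ)) ⬝ᵥ star w)).im := by
  simp only [dotProduct, Finset.mul_sum, Complex.im_sum, Pi.star_apply, Complex.star_def]
  refine Finset.sum_congr rfl fun j _ => ?_
  rw [mul_left_comm, Complex.im_ofReal_mul, mul_comm]

theorem star_ofReal_comp {ι : Type*} (u : ι → ℝ) :
    star (fun j => (u j : ℂ)) = fun j => (u j : ℂ) :=
  funext fun j => Complex.conj_ofReal (u j)

section FrameFlow

variable {d : ℕ} (Fv : Fin d → ℝ → Fin (d + 2) → ℝ) (m : ℝ → Fin (d + 2) → ℂ)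
  (ψ : ℝ → ℂ) (B : ℝ → ℝ) (lam : Fin d → Fin d → ℝ → ℂ) (V : Fin d → ℝ → ℝ)
  (g ginv : Fin d → Fin d → ℝ → ℝ) (dAψ upDAψ : Fin d → ℝ → ℂ)
  (covDV covDVl : Fin d → Fin d → ℝ → ℝ)

def frameNormalInner (α : Fin d) (t : ℝ) : ℂ := (fun j => (Fv α t j : ℂ)) ⬝ᵥ star (m t)

def normalNormSq (t : ℝ) : ℂ := m t ⬝ᵥ star (m t)

def normalDotSelf (t : ℝ) : ℂ := m t ⬝ᵥ m t

def frameGram (α β : Fin d) (t : ℝ) : ℝ := Fv α t ⬝ᵥ Fv β t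

def frameDefect (t : ℝ) : FrameDefect d :=
  (fun α => frameNormalInner Fv m α t, fun α β => g α β t - frameGram Fv α β t,
    normalNormSq m t - 2, normalDotSelf m t)

def frameDefectField (t : ℝ) (x : FrameDefect d) : FrameDefect d :=
  defectField (B t) (fun α γ => frameCoeff ψ lam ginv covDV α γ t)
    (fun α => normalCoeff lam V dAψ α t) (fun α => normalCoeffUp lam V ginv upDAψ α t) x

def FrameEquation : Prop :=
  ∀ α j t, HasDerivAt (fun s => Fv α s j) (-(normalCoeff lam V dAψ α t * conj (m t j)).im
    + ∑ γ, frameCoeff ψ lam ginv covDV α γ t * Fv γ t j) t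

def NormalEquation : Prop :=
  ∀ j t, HasDerivAt (fun s => m s j)
    (-I * B t * m t j - I * ∑ α, normalCoeffUp lam V ginv upDAψ α t * Fv α t j) t

variable {Fv m ψ B lam V g ginv dAψ upDAψ covDV covDVl}

theorem conj_frameNormalInner (β : Fin d) (t : ℝ) :
    conj (frameNormalInner Fv m β t) = m t ⬝ᵥ fun j => (Fv β t j : ℂ) := by
  rw [frameNormalInner, ← Complex.star_def, ← dotProduct_star, star_ofReal_comp]

theorem hasDerivAt_frame
    (hFODE : FrameEquation Fv m ψ lam V ginv dAψ covDV) (α : Fin d) (t : ℝ) :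
    HasDerivAt (Fv α) (-(fun j => (normalCoeff lam V dAψ α t * conj (m t j)).im)
      + ∑ γ, frameCoeff ψ lam ginv covDV α γ t • Fv γ t) t := by
  refine hasDerivAt_pi.2 fun j => (hFODE α j t).congr_deriv ?_
  simp only [Finset.sum_apply, Pi.add_apply, Pi.neg_apply, Pi.smul_apply, smul_eq_mul]

theorem hasDerivAt_frame_ofReal
    (hFODE : FrameEquation Fv m ψ lam V ginv dAψ covDV) (α : Fin d) (t : ℝ) :
    HasDerivAt (fun s j => (Fv α s j : ℂ))
      ((I / 2) • (normalCoeff lam V dAψ α t • star (m t) - conj (normalCoeff lam V dAψ α t) • m t)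
        + ∑ γ, (frameCoeff ψ lam ginv covDV α γ t : ℂ) • fun j => (Fv γ t j : ℂ)) t := by
  refine hasDerivAt_pi.2 fun j =>
    (hasDerivAt_pi.1 (hasDerivAt_frame hFODE α t) j).ofReal_comp.congr_deriv ?_
  simp only [Pi.add_apply, Pi.neg_apply, Pi.sub_apply, Pi.smul_apply, Pi.star_apply,
    Finset.sum_apply, smul_eq_mul, Complex.ofReal_add, Complex.ofReal_neg, Complex.ofReal_sum,
    Complex.ofReal_mul, Complex.im_eq_sub_conj, map_mul, Complex.conj_conj, Complex.star_def,
    mul_inv, Complex.inv_I, div_eq_mul_inv]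
  ring

theorem hasDerivAt_normal
    (hmODE : NormalEquation Fv m B lam V ginv upDAψ) (t : ℝ) :
    HasDerivAt m (-(I * B t) • m t
      - I • ∑ β, normalCoeffUp lam V ginv upDAψ β t • fun j => (Fv β t j : ℂ)) t := by
  refine hasDerivAt_pi.2 fun j => (hmODE j t).congr_deriv ?_
  simp only [Pi.sub_apply, Pi.smul_apply, Finset.sum_apply, smul_eq_mul]
  ring

theorem hasDerivAt_frameNormalInner
    (hginv' : ∀ α β t, ∑ σ, g α σ t * ginv σ β t = if α = β then 1 else 0)
    (hup : ∀ α t, upDAψ α t = ∑ μ, (ginv α μ t : ℂ) * dAψ μ t)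
    (hFODE : FrameEquation Fv m ψ lam V ginv dAψ covDV)
    (hmODE : NormalEquation Fv m B lam V ginv upDAψ) (α : Fin d) (t : ℝ) :
    HasDerivAt (frameNormalInner Fv m α)
      ((frameDefectField ψ B lam V ginv dAψ upDAψ covDV t (frameDefect Fv m g t)).1 α) t := by
  have hc : ∑ β, conj (normalCoeffUp lam V ginv upDAψ β t) * (g α β t : ℂ)
      = conj (normalCoeff lam V dAψ α t) := by
    simp_rw [← sum_mul_normalCoeffUp (lam := lam) (V := V) hginv' hup α t, map_sum, map_mul,
      Complex.conj_ofReal, mul_comm]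
  refine ((hasDerivAt_frame_ofReal hFODE α t).dotProduct
    (hasDerivAt_normal hmODE t).star).congr_deriv ?_
  simp only [frameDefectField, defectField, frameDefect, frameNormalInner, normalNormSq,
    normalDotSelf, frameGram, add_dotProduct, sub_dotProduct, smul_dotProduct, sum_dotProduct,
    dotProduct_sub, dotProduct_smul, dotProduct_sum, star_sub, star_smul, star_sum, star_neg,
    smul_eq_mul, star_ofReal_comp, star_dotProduct_star, ← ofReal_dotProduct, Complex.ofReal_sub,
    mul_sub, Finset.sum_sub_distrib, Complex.star_def, map_mul, Complex.conj_I, Complex.conj_ofReal]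
  linear_combination I * hc

theorem hasDerivAt_metric_sub_frameGram
    (hginv' : ∀ α β t, ∑ σ, g α σ t * ginv σ β t = if α = β then 1 else 0)
    (hgsymm : ∀ α β t, g α β t = g β α t)
    (hlow : ∀ α β t, covDVl α β t = ∑ γ, g β γ t * covDV α γ t)
    (hgODE : ∀ α β t, HasDerivAt (g α β)
        (2 * (ψ t * conj (lam α β t)).im + covDVl α β t + covDVl β α t) t)
    (hFODE : FrameEquation Fv m ψ lam V ginv dAψ covDV)
    (α β : Fin d) (t : ℝ) :
    HasDerivAt (fun s => g α β s - frameGram Fv α β s)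
      ((frameDefectField ψ B lam V ginv dAψ upDAψ covDV t (frameDefect Fv m g t)).2.1 α β) t := by
  have hαβ := sum_frameCoeff_mul (ψ := ψ) (lam := lam) hginv' hgsymm hlow α β t
  have hβα := sum_frameCoeff_mul (ψ := ψ) (lam := lam) hginv' hgsymm hlow β α t
  have hsymm := im_mul_conj_lam_symm hgsymm hgODE α β t
  refine ((hgODE α β t).sub ((hasDerivAt_frame hFODE α t).dotProduct
    (hasDerivAt_frame hFODE β t))).congr_deriv ?_
  rw [dotProduct_comm (Fv α t)]
  simp only [frameDefectField, defectField, frameDefect, frameNormalInner, frameGram,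
    add_dotProduct, neg_dotProduct, sum_dotProduct, smul_dotProduct, smul_eq_mul,
    im_mul_conj_dotProduct, mul_sub, Finset.sum_sub_distrib]
  linarith

theorem hasDerivAt_normalNormSq
    (hmODE : NormalEquation Fv m B lam V ginv upDAψ) (t : ℝ) :
    HasDerivAt (fun s => normalNormSq m s - 2)
      ((frameDefectField ψ B lam V ginv dAψ upDAψ covDV t (frameDefect Fv m g t)).2.2.1) t := by
  refine (((hasDerivAt_normal hmODE t).dotProduct
    (hasDerivAt_normal hmODE t).star).sub_const 2).congr_deriv ?_
  simp only [frameDefectField, defectField, frameDefect, map_sum, map_mul,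
    conj_frameNormalInner]
  simp only [frameNormalInner, sub_dotProduct, smul_dotProduct, sum_dotProduct,
    dotProduct_sub, dotProduct_smul, dotProduct_sum, star_sub, star_smul, star_sum, star_neg,
    smul_eq_mul, star_ofReal_comp, Complex.star_def, map_mul, Complex.conj_I, Complex.conj_ofReal]
  ring

theorem hasDerivAt_normalDotSelf
    (hmODE : NormalEquation Fv m B lam V ginv upDAψ) (t : ℝ) :
    HasDerivAt (normalDotSelf m)
      ((frameDefectField ψ B lam V ginv dAψ upDAψ covDV t (frameDefect Fv m g t)).2.2.2) t := by
  refine ((hasDerivAt_normal hmODE t).dotProduct (hasDerivAt_normal hmODE t)).congr_deriv ?_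
  simp only [frameDefectField, defectField, frameDefect, normalDotSelf, conj_frameNormalInner,
    dotProduct_sub, dotProduct_smul, dotProduct_sum, smul_eq_mul, dotProduct_comm _ (m t)]
  ring

theorem hasDerivAt_frameDefect
    (hup : ∀ α t, upDAψ α t = ∑ μ, (ginv α μ t : ℂ) * dAψ μ t)
    (hlow : ∀ α β t, covDVl α β t = ∑ γ, g β γ t * covDV α γ t)
    (hginv' : ∀ α β t, ∑ σ, g α σ t * ginv σ β t = if α = β then 1 else 0)
    (hgsymm : ∀ α β t, g α β t = g β α t)
    (hgODE : ∀ α β t, HasDerivAt (g α β)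
        (2 * (ψ t * conj (lam α β t)).im + covDVl α β t + covDVl β α t) t)
    (hFODE : FrameEquation Fv m ψ lam V ginv dAψ covDV)
    (hmODE : NormalEquation Fv m B lam V ginv upDAψ) (t : ℝ) :
    HasDerivAt (frameDefect Fv m g)
      (frameDefectField ψ B lam V ginv dAψ upDAψ covDV t (frameDefect Fv m g t)) t := by
  refine .prodMk (hasDerivAt_pi.2 fun α => ?_) <|
    .prodMk (hasDerivAt_pi.2 fun α => hasDerivAt_pi.2 fun β => ?_) (.prodMk ?_ ?_)
  · exact hasDerivAt_frameNormalInner hginv' hup hFODE hmODE α t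
  · exact hasDerivAt_metric_sub_frameGram (B := B) (upDAψ := upDAψ) hginv' hgsymm hlow hgODE hFODE
      α β t
  · exact hasDerivAt_normalNormSq (ψ := ψ) (dAψ := dAψ) (covDV := covDV) hmODE t
  · exact hasDerivAt_normalDotSelf (ψ := ψ) (dAψ := dAψ) (covDV := covDV) hmODE t

end FrameFlow

theorem frame_orthonormality_propagation_general {d : ℕ}
    (Fv : Fin d → ℝ → Fin (d + 2) → ℝ)            -- the tangent frame `F_α(t)`
    (m : ℝ → Fin (d + 2) → ℂ)                     -- the normal frame `m(t)`
    (ψ : ℝ → ℂ) (B : ℝ → ℝ)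
    (lam : Fin d → Fin d → ℝ → ℂ)                 -- `λ_{αβ}`
    (V : Fin d → ℝ → ℝ)                           -- `V^γ`
    (g ginv : Fin d → Fin d → ℝ → ℝ)
    (dAψ : Fin d → ℝ → ℂ)                         -- the coefficient `∂^A_α ψ`
    (upDAψ : Fin d → ℝ → ℂ)                       -- the coefficient `∂^{A,α} ψ`
    (covDV : Fin d → Fin d → ℝ → ℝ)               -- the coefficient `∇_α V^γ`
    (covDVl : Fin d → Fin d → ℝ → ℝ)              -- the coefficient `∇_α V_β`
    -- continuity of all coefficients in time:
    (hψc : Continuous ψ) (hBc : Continuous B)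
    (hlamc : ∀ α β, Continuous (lam α β)) (hVc : ∀ γ, Continuous (V γ))
    (hginvc : ∀ α β, Continuous (ginv α β))
    (hdAc : ∀ α, Continuous (dAψ α)) (hupc : ∀ α, Continuous (upDAψ α))
    (hcovc : ∀ α γ, Continuous (covDV α γ))
    -- index raising and lowering relations:
    (hup : ∀ α t, upDAψ α t = ∑ μ, (ginv α μ t : ℂ) * dAψ μ t)
    (hlow : ∀ α β t, covDVl α β t = ∑ γ, g β γ t * covDV α γ t)
    (hginv' : ∀ α β t, ∑ σ, g α σ t * ginv σ β t = if α = β then 1 else 0)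
    (hgsymm : ∀ α β t, g α β t = g β α t)
    -- evolution of the metric:
    (hgODE : ∀ α β t, HasDerivAt (g α β)
        (2 * (ψ t * (starRingEnd ℂ) (lam α β t)).im + covDVl α β t + covDVl β α t) t)
    -- the equations of motion of the frame:
    (hFODE : ∀ α j t, HasDerivAt (fun s => Fv α s j)
        (-(((dAψ α t - Complex.I * ∑ γ, lam α γ t * (V γ t : ℂ)) *
              (starRingEnd ℂ) (m t j)).im)
          + ∑ γ, ((ψ t * (starRingEnd ℂ) (lamUp ginv lam γ α t)).im + covDV α γ t) *
              Fv γ t j) t)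
    (hmODE : ∀ j t, HasDerivAt (fun s => m s j)
        (-Complex.I * (B t : ℂ) * m t j
          - Complex.I * ∑ α, (upDAψ α t - Complex.I * ∑ γ, lamUp ginv lam α γ t * (V γ t : ℂ))
              * (Fv α t j : ℂ)) t)
    -- orthonormality at the initial time:
    (hFm0 : ∀ α, ∑ j, (Fv α 0 j : ℂ) * (starRingEnd ℂ) (m 0 j) = 0)
    (hmm0 : ∑ j, m 0 j * (starRingEnd ℂ) (m 0 j) = 2)
    (hmmbar0 : ∑ j, m 0 j * m 0 j = 0)
    (hFF0 : ∀ α β, ∑ j, Fv α 0 j * Fv β 0 j = g α β 0) :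
    ∀ t : ℝ,
      (∀ α, ∑ j, (Fv α t j : ℂ) * (starRingEnd ℂ) (m t j) = 0) ∧
      (∑ j, m t j * (starRingEnd ℂ) (m t j) = 2) ∧
      (∑ j, m t j * m t j = 0) ∧
      (∀ α β, ∑ j, Fv α t j * Fv β t j = g α β t) := by
  have hK : Continuous fun t => defectFieldBound (B t)
      (fun α γ => frameCoeff ψ lam ginv covDV α γ t) (fun α => normalCoeff lam V dAψ α t)
      (fun α => normalCoeffUp lam V ginv upDAψ α t) := by
    simp only [defectFieldBound, frameCoeff, normalCoeff, normalCoeffUp, lamUp]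
    fun_prop
  have h0 : frameDefect Fv m g 0 = 0 :=
    Prod.ext (funext hFm0) <|
      Prod.ext (funext fun α => funext fun β => sub_eq_zero.2 (hFF0 α β).symm) <|
        Prod.ext (sub_eq_zero.2 hmm0) hmmbar0
  intro t
  have ht := eq_zero_of_norm_deriv_le_mul_norm hK
    (hasDerivAt_frameDefect hup hlow hginv' hgsymm hgODE hFODE hmODE)
    (fun t => norm_defectField_le _ _ _ _ _) h0 t
  simp only [frameDefect, Prod.mk_eq_zero, funext_iff, Pi.zero_apply, sub_eq_zero] at ht
  exact ⟨ht.1, ht.2.2.1, ht.2.2.2, fun α β => (ht.2.1 α β).symm⟩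

/-- Propagation of orthonormality of the moving frame.  Suppose
`(F_α, m)` solve the linear ODE system in time
`∂_t F_α = −Im(∂^A_α ψ conj m − iλ_{αγ}V^γ conj m) + [Im(ψ conj λ^γ_α) + ∇_α V^γ] F_γ`,
`∂_t m + iB m = −i(∂^{A,α}ψ − iλ^α_γ V^γ) F_α`,
with coefficients continuous in time, and that at `t = 0` the orthogonality relations
`⟨F_α, m⟩ = 0`, `⟨m,m⟩ = 2`, `⟨m, conj m⟩ = 0`, `⟨F_α, F_β⟩ = g_{αβ}` hold, where
`∂_t g_{αβ} = 2 Im(ψ conj λ_{αβ}) + ∇_α V_β + ∇_β V_α`.  Then these relations are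
propagated: they hold for all `t`. -/
theorem frame_orthonormality_propagation {d : ℕ}
    (Fv : Fin d → ℝ → Fin (d + 2) → ℝ)            -- the tangent frame `F_α(t)`
    (m : ℝ → Fin (d + 2) → ℂ)                     -- the normal frame `m(t)`
    (ψ : ℝ → ℂ) (B : ℝ → ℝ)
    (lam : Fin d → Fin d → ℝ → ℂ)                 -- `λ_{αβ}`
    (V : Fin d → ℝ → ℝ)                           -- `V^γ`
    (g ginv : Fin d → Fin d → ℝ → ℝ)
    (dAψ : Fin d → ℝ → ℂ)                         -- the coefficient `∂^A_α ψ`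
    (upDAψ : Fin d → ℝ → ℂ)                       -- the coefficient `∂^{A,α} ψ`
    (covDV : Fin d → Fin d → ℝ → ℝ)               -- the coefficient `∇_α V^γ`
    (covDVl : Fin d → Fin d → ℝ → ℝ)              -- the coefficient `∇_α V_β`
    -- continuity of all coefficients in time:
    (hψc : Continuous ψ) (hBc : Continuous B)
    (hlamc : ∀ α β, Continuous (lam α β)) (hVc : ∀ γ, Continuous (V γ))
    (hgc : ∀ α β, Continuous (g α β)) (hginvc : ∀ α β, Continuous (ginv α β))
    (hdAc : ∀ α, Continuous (dAψ α)) (hupc : ∀ α, Continuous (upDAψ α))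
    (hcovc : ∀ α γ, Continuous (covDV α γ)) (hcovlc : ∀ α β, Continuous (covDVl α β))
    -- index raising and lowering relations:
    (hup : ∀ α t, upDAψ α t = ∑ μ, (ginv α μ t : ℂ) * dAψ μ t)
    (hlow : ∀ α β t, covDVl α β t = ∑ γ, g β γ t * covDV α γ t)
    (hginv : ∀ α β t, ∑ σ, ginv α σ t * g σ β t = if α = β then 1 else 0)
    (hginv' : ∀ α β t, ∑ σ, g α σ t * ginv σ β t = if α = β then 1 else 0)
    (hgsymm : ∀ α β t, g α β t = g β α t)
    -- evolution of the metric: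
    (hgODE : ∀ α β t, HasDerivAt (g α β)
        (2 * (ψ t * (starRingEnd ℂ) (lam α β t)).im + covDVl α β t + covDVl β α t) t)
    -- the equations of motion of the frame:
    (hFODE : ∀ α j t, HasDerivAt (fun s => Fv α s j)
        (-(((dAψ α t - Complex.I * ∑ γ, lam α γ t * (V γ t : ℂ)) *
              (starRingEnd ℂ) (m t j)).im)
          + ∑ γ, ((ψ t * (starRingEnd ℂ) (lamUp ginv lam γ α t)).im + covDV α γ t) *
              Fv γ t j) t)
    (hmODE : ∀ j t, HasDerivAt (fun s => m s j)
        (-Complex.I * (B t : ℂ) * m t j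
          - Complex.I * ∑ α, (upDAψ α t - Complex.I * ∑ γ, lamUp ginv lam α γ t * (V γ t : ℂ))
              * (Fv α t j : ℂ)) t)
    -- orthonormality at the initial time:
    (hFm0 : ∀ α, ∑ j, (Fv α 0 j : ℂ) * (starRingEnd ℂ) (m 0 j) = 0)
    (hmm0 : ∑ j, m 0 j * (starRingEnd ℂ) (m 0 j) = 2)
    (hmmbar0 : ∑ j, m 0 j * m 0 j = 0)
    (hFF0 : ∀ α β, ∑ j, Fv α 0 j * Fv β 0 j = g α β 0) :
    ∀ t : ℝ,
      (∀ α, ∑ j, (Fv α t j : ℂ) * (starRingEnd ℂ) (m t j) = 0) ∧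
      (∑ j, m t j * (starRingEnd ℂ) (m t j) = 2) ∧
      (∑ j, m t j * m t j = 0) ∧
      (∀ α β, ∑ j, Fv α t j * Fv β t j = g α β t) :=
  frame_orthonormality_propagation_general Fv m ψ B lam V g ginv dAψ upDAψ covDV covDVl hψc hBc
    hlamc hVc hginvc hdAc hupc hcovc hup hlow hginv' hgsymm hgODE hFODE hmODE hFm0 hmm0 hmmbar0 hFF0
end
end
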